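/- arXiv:1710.09430 — 3 statements merged into one kernel-verified Lean document; each statement's English description precedes it below -/
import Mathlib

section
/- Let H be a symmetric positive definite d×d matrix with minimal eigenvalue μ > 0, and suppose E[‖x‖² x xᵀ] ⪯ R² H for a random vector x with E[x xᵀ] = H. If 0 < γ ≤ 1/R², then for any fixed vector v, E[‖(I − γ x xᵀ) v‖²] ≤ (1 − γμ) ‖v‖². -/
/-!
Expanding the square, `E‖(I - γxxᵀ)v‖² = ‖v‖² - 2γ vᵀHv + γ² vᵀMv`. The fourth-moment bound gives
`vᵀMv ≤ R² vᵀHv`, so with `γR² ≤ 1` the last two terms are at most `-γ vᵀHv`, and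
`vᵀHv ≥ m‖v‖²` because `H - m` has nonnegative spectrum.
-/

open MeasureTheory Matrix

namespace Matrix

variable {n : Type*} [Fintype n]

open scoped MatrixOrder in
theorem IsHermitian.mul_dotProduct_self_le_dotProduct_mulVec [DecidableEq n] {H : Matrix n n ℝ}
    (hH : H.IsHermitian) {m : ℝ} (hm : ∀ μ ∈ spectrum ℝ H, m ≤ μ) (v : n → ℝ) :
    m * (v ⬝ᵥ v) ≤ v ⬝ᵥ H *ᵥ v := by
  have h : (H - algebraMap ℝ _ m).PosSemidef :=
    (algebraMap_le_iff_le_spectrum (a := H) hH.isSelfAdjoint).mpr hm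
  simpa [sub_mulVec, Algebra.algebraMap_eq_smul_one, smul_mulVec, dotProduct_smul] using
    h.dotProduct_mulVec_nonneg v

theorem dotProduct_self_one_sub_smul_vecMulVec_mulVec {R : Type*} [CommRing R] [DecidableEq n]
    (γ : R) (a v : n → R) :
    (1 - γ • vecMulVec a a) *ᵥ v ⬝ᵥ (1 - γ • vecMulVec a a) *ᵥ v
      = v ⬝ᵥ v - 2 * γ * (v ⬝ᵥ vecMulVec a a *ᵥ v)
        + γ ^ 2 * (v ⬝ᵥ ((a ⬝ᵥ a) • vecMulVec a a) *ᵥ v) := by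
  simp only [sub_mulVec, one_mulVec, smul_mulVec, vecMulVec_mulVec, dotProduct_smul,
    sub_dotProduct, dotProduct_sub, smul_dotProduct, smul_eq_mul, MulOpposite.smul_eq_mul_unop,
    MulOpposite.unop_op, dotProduct_comm v a]
  ring

section Integral

variable {m Ω : Type*} [Fintype m] [MeasurableSpace Ω] {μ : Measure Ω} {A : Ω → Matrix m n ℝ}

theorem integrable_dotProduct_mulVec (hA : ∀ i j, Integrable (fun ω => A ω i j) μ)
    (u : m → ℝ) (v : n → ℝ) : Integrable (fun ω => u ⬝ᵥ A ω *ᵥ v) μ := by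
  simp only [dotProduct, mulVec]
  exact integrable_finsetSum _ fun i _ => (integrable_finsetSum _ fun j _ =>
    (hA i j).mul_const (v j)).const_mul (u i)

theorem integral_dotProduct_mulVec (hA : ∀ i j, Integrable (fun ω => A ω i j) μ)
    {B : Matrix m n ℝ} (hB : ∀ i j, B i j = ∫ ω, A ω i j ∂μ) (u : m → ℝ) (v : n → ℝ) :
    ∫ ω, u ⬝ᵥ A ω *ᵥ v ∂μ = u ⬝ᵥ B *ᵥ v := by
  simp only [dotProduct, mulVec, hB]
  rw [integral_finsetSum _ fun i _ => (integrable_finsetSum _ fun j _ =>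
    (hA i j).mul_const (v j)).const_mul (u i)]
  refine Finset.sum_congr rfl fun i _ => ?_
  rw [integral_const_mul, integral_finsetSum _ fun j _ => (hA i j).mul_const (v j)]
  simp only [integral_mul_const]

theorem integral_dotProduct_self_one_sub_smul_vecMulVec_mulVec [DecidableEq n]
    [IsProbabilityMeasure μ] {x : Ω → n → ℝ} {H M : Matrix n n ℝ}
    (hHint : ∀ i j, Integrable (fun ω => vecMulVec (x ω) (x ω) i j) μ)
    (hH : ∀ i j, H i j = ∫ ω, vecMulVec (x ω) (x ω) i j ∂μ)
    (hMint : ∀ i j, Integrable (fun ω => ((x ω ⬝ᵥ x ω) • vecMulVec (x ω) (x ω)) i j) μ)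
    (hM : ∀ i j, M i j = ∫ ω, ((x ω ⬝ᵥ x ω) • vecMulVec (x ω) (x ω)) i j ∂μ)
    (γ : ℝ) (v : n → ℝ) :
    ∫ ω, (1 - γ • vecMulVec (x ω) (x ω)) *ᵥ v ⬝ᵥ (1 - γ • vecMulVec (x ω) (x ω)) *ᵥ v ∂μ
      = v ⬝ᵥ v - 2 * γ * (v ⬝ᵥ H *ᵥ v) + γ ^ 2 * (v ⬝ᵥ M *ᵥ v) := by
  have hHv := (integrable_dotProduct_mulVec hHint v v).const_mul (2 * γ)
  have hMv := (integrable_dotProduct_mulVec hMint v v).const_mul (γ ^ 2)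
  have hconst_sub_Hv :
      Integrable (fun ω => v ⬝ᵥ v - 2 * γ * (v ⬝ᵥ vecMulVec (x ω) (x ω) *ᵥ v)) μ :=
    (integrable_const _).sub hHv
  simp_rw [dotProduct_self_one_sub_smul_vecMulVec_mulVec]
  rw [integral_add hconst_sub_Hv hMv, integral_sub (integrable_const _) hHv,
    integral_const, integral_const_mul, integral_const_mul, integral_dotProduct_mulVec hHint hH,
    integral_dotProduct_mulVec hMint hM]
  simp

end Integral

end Matrix

theorem sgd_bias_one_step_contraction_general
    {d : ℕ} {Ω : Type*} [MeasurableSpace Ω] (μ : Measure Ω)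
    [IsProbabilityMeasure μ] (x : Ω → (Fin d → ℝ))
    (H M : Matrix (Fin d) (Fin d) ℝ)
    (hHdef : ∀ i j, H i j = ∫ ω, x ω i * x ω j ∂μ)
    (hHint : ∀ i j, Integrable (fun ω => x ω i * x ω j) μ)
    (hMdef : ∀ i j, M i j = ∫ ω, (∑ k, x ω k ^ 2) * (x ω i * x ω j) ∂μ)
    (hMint : ∀ i j, Integrable (fun ω => (∑ k, x ω k ^ 2) * (x ω i * x ω j)) μ)
    (hH : H.PosDef) (m : ℝ)
    (hmin : ∀ μ' ∈ spectrum ℝ H, m ≤ μ')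
    (R2 : ℝ) (hR : (R2 • H - M).PosSemidef)
    (γ : ℝ) (hγ0 : 0 < γ) (hγ : γ ≤ 1 / R2)
    (v : Fin d → ℝ) :
    ∫ ω, ∑ i, (((1 : Matrix (Fin d) (Fin d) ℝ)
        - γ • vecMulVec (x ω) (x ω)).mulVec v i) ^ 2 ∂μ ≤
      (1 - γ * m) * ∑ i, (v i) ^ 2 := by
  have hM : ∀ ω i j, (∑ k, x ω k ^ 2) * (x ω i * x ω j)
      = ((x ω ⬝ᵥ x ω) • vecMulVec (x ω) (x ω)) i j := fun ω i j => by
    simp [vecMulVec_apply, dotProduct, sq]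
  simp_rw [hM] at hMint hMdef
  have hE := integral_dotProduct_self_one_sub_smul_vecMulVec_mulVec hHint hHdef hMint hMdef γ v
  have hγR : γ * R2 ≤ 1 := by
    have hR2 : 0 < R2 := by
      by_contra! h
      linarith [div_nonpos_of_nonneg_of_nonpos zero_le_one h]
    rwa [le_div_iff₀ hR2] at hγ
  have hHv : 0 ≤ v ⬝ᵥ H *ᵥ v := hH.posSemidef.dotProduct_mulVec_nonneg v
  have hMv : v ⬝ᵥ M *ᵥ v ≤ R2 * (v ⬝ᵥ H *ᵥ v) := by
    simpa [sub_mulVec, smul_mulVec, dotProduct_smul] using hR.dotProduct_mulVec_nonneg v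
  have hmv := hH.isHermitian.mul_dotProduct_self_le_dotProduct_mulVec hmin v
  have hsum_sq : ∀ w : Fin d → ℝ, ∑ i, w i ^ 2 = w ⬝ᵥ w := fun w => by simp [dotProduct, sq]
  simp only [hsum_sq, hE]
  calc v ⬝ᵥ v - 2 * γ * (v ⬝ᵥ H *ᵥ v) + γ ^ 2 * (v ⬝ᵥ M *ᵥ v)
      ≤ v ⬝ᵥ v - γ * (v ⬝ᵥ H *ᵥ v) := by
        nlinarith [mul_le_mul_of_nonneg_left hMv (sq_nonneg γ),
          mul_le_mul_of_nonneg_right hγR (mul_nonneg hγ0.le hHv)]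
    _ ≤ (1 - γ * m) * (v ⬝ᵥ v) := by nlinarith

/-- One-step contraction of the noiseless SGD process:
if `H = E[xxᵀ]` is positive definite with least eigenvalue `m`, the fourth
moment bound `E[‖x‖² xxᵀ] ⪯ R² H` holds, and `0 < γ ≤ 1/R²`, then for every
vector `v`, `E[‖(I − γ xxᵀ)v‖²] ≤ (1 − γ m)‖v‖²`. -/
theorem sgd_bias_one_step_contraction
    {d : ℕ} {Ω : Type*} [MeasurableSpace Ω] (μ : Measure Ω)
    [IsProbabilityMeasure μ] (x : Ω → (Fin d → ℝ))
    (H M : Matrix (Fin d) (Fin d) ℝ)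
    (hHdef : ∀ i j, H i j = ∫ ω, x ω i * x ω j ∂μ)
    (hHint : ∀ i j, Integrable (fun ω => x ω i * x ω j) μ)
    (hMdef : ∀ i j, M i j = ∫ ω, (∑ k, x ω k ^ 2) * (x ω i * x ω j) ∂μ)
    (hMint : ∀ i j, Integrable (fun ω => (∑ k, x ω k ^ 2) * (x ω i * x ω j)) μ)
    (hH : H.PosDef) (m : ℝ) (hm : 0 < m)
    (hmin : ∀ μ' ∈ spectrum ℝ H, m ≤ μ')
    (hmeig : m ∈ spectrum ℝ H)
    (R2 : ℝ) (hR : (R2 • H - M).PosSemidef)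
    (γ : ℝ) (hγ0 : 0 < γ) (hγ : γ ≤ 1 / R2)
    (v : Fin d → ℝ) :
    ∫ ω, ∑ i, (((1 : Matrix (Fin d) (Fin d) ℝ)
        - γ • vecMulVec (x ω) (x ω)).mulVec v i) ^ 2 ∂μ ≤
      (1 - γ * m) * ∑ i, (v i) ^ 2 :=
  sgd_bias_one_step_contraction_general μ x H M hHdef hHint hMdef hMint hH m hmin R2 hR γ hγ0 hγ v
end

section
/- Let H be symmetric positive definite, γ > 0 with I − γH ⪰ 0, and define T̃(M) := HM + MH − γHMH on symmetric matrices. Then for any symmetric M, the matrix X := γ Σ_{t=0}^∞ (I − γH)^t M (I − γH)^t is well-defined (the series converges) and satisfies T̃(X) = M. -/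
/-!
With `A := 1 - γH`, the series `S := Σ_t A^t M A^t` solves the Stein equation `A S A + M = S`,
because conjugating by `A` shifts the series by one term; expanding `S - A S A` gives exactly
`T̃(γ S)`. Convergence comes from diagonalising the symmetric matrix `A`: its eigenvalues lie in
`[0, 1)` (nonnegative as `A ⪰ 0`, below `1` as `1 - A = γH ≻ 0`), so every entry of the
diagonalised series is a geometric series.
-/

open Matrix

theorem Summable.mul_tsum_pow_mul_mul_pow_mul_add {R : Type*} [Ring R] [TopologicalSpace R]
    [IsTopologicalRing R] [T2Space R] {A M : R}
    (h : Summable fun t : ℕ => A ^ t * M * A ^ t) :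
    A * (∑' t : ℕ, A ^ t * M * A ^ t) * A + M = ∑' t : ℕ, A ^ t * M * A ^ t := by
  have hshift (t : ℕ) : A ^ (t + 1) * M * A ^ (t + 1) = A * (A ^ t * M * A ^ t) * A := by
    simp only [pow_succ', mul_assoc]
    rw [(Commute.self_pow A t).eq]
  conv_rhs => rw [h.tsum_eq_zero_add]
  simp_rw [hshift, Summable.tsum_mul_right _ (h.mul_left A), h.tsum_mul_left, pow_zero, one_mul,
    mul_one, add_comm]

theorem sub_one_sub_smul_mul_mul_one_sub_smul {K R : Type*} [CommRing K] [Ring R] [Algebra K R]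
    (H S : R) (γ : K) :
    S - (1 - γ • H) * S * (1 - γ • H) = H * (γ • S) + (γ • S) * H - γ • (H * (γ • S) * H) := by
  simp only [sub_mul, mul_sub, one_mul, mul_one, smul_mul_assoc, mul_smul_comm, smul_sub,
    smul_smul]
  abel

namespace Matrix

variable {n : Type*} [Fintype n] [DecidableEq n]

theorem summable_diagonal_pow_mul_mul_diagonal_pow {K : Type*} [NormedField K] [CompleteSpace K]
    {d : n → K} (hd : ∀ i, ‖d i‖ < 1) (N : Matrix n n K) :
    Summable fun t : ℕ => diagonal d ^ t * N * diagonal d ^ t := by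
  simp_rw [diagonal_pow]
  refine Pi.summable.2 fun k => Pi.summable.2 fun l => ?_
  simp only [diagonal_mul, mul_diagonal, Pi.pow_apply, mul_right_comm _ (N k l), ← mul_pow]
  have hkl : ‖d k * d l‖ < 1 := by
    rw [norm_mul]
    exact mul_lt_one_of_nonneg_of_lt_one_left (norm_nonneg _) (hd k) (hd l).le
  exact (summable_geometric_of_norm_lt_one hkl).mul_right (N k l)

variable {𝕜 : Type*} [RCLike 𝕜]

theorem IsHermitian.summable_pow_mul_mul_pow {A : Matrix n n 𝕜} (hA : A.IsHermitian)
    (h : ∀ i, |hA.eigenvalues i| < 1) (M : Matrix n n 𝕜) :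
    Summable fun t : ℕ => A ^ t * M * A ^ t := by
  let U := hA.eigenvectorUnitary
  let φ := Unitary.conjStarAlgAut 𝕜 (Matrix n n 𝕜) U
  let D : Matrix n n 𝕜 := diagonal (RCLike.ofReal ∘ hA.eigenvalues)
  have hAD : A = φ D := hA.spectral_theorem
  have hD : Summable fun t : ℕ => φ (D ^ t * φ.symm M * D ^ t) :=
    ((summable_diagonal_pow_mul_mul_diagonal_pow (fun i => by simpa using h i) _).mul_left
      (U : Matrix n n 𝕜)).mul_right (star U : Matrix n n 𝕜)
  convert hD using 2 with t
  rw [map_mul, map_mul, map_pow, φ.apply_symm_apply, ← hAD]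

open scoped ComplexOrder in
theorem IsHermitian.eigenvalues_lt_one_of_posDef_one_sub {A : Matrix n n 𝕜}
    (hA : A.IsHermitian) (h : (1 - A).PosDef) (i : n) : hA.eigenvalues i < 1 := by
  let v := hA.eigenvectorBasis i
  have hv : star ⇑v ⬝ᵥ ⇑v = 1 := by
    rw [dotProduct_comm, ← EuclideanSpace.inner_eq_star_dotProduct]
    simp [v, hA.eigenvectorBasis.orthonormal.1 i]
  have hpos := h.re_dotProduct_pos (x := ⇑v) fun h0 => by simp [h0] at hv
  rw [sub_mulVec, one_mulVec, dotProduct_sub, hv, map_sub, RCLike.one_re,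
    ← hA.eigenvalues_eq] at hpos
  linarith

end Matrix

theorem tilde_T_inverse_formula_general
    {d : ℕ} (H : Matrix (Fin d) (Fin d) ℝ) (hH : H.PosDef)
    (γ : ℝ) (hγ : 0 < γ)
    (hle : ((1 : Matrix (Fin d) (Fin d) ℝ) - γ • H).PosSemidef)
    (M : Matrix (Fin d) (Fin d) ℝ) :
    Summable (fun t : ℕ => ((1 : Matrix (Fin d) (Fin d) ℝ) - γ • H) ^ t * M *
        ((1 : Matrix (Fin d) (Fin d) ℝ) - γ • H) ^ t) ∧
    (let X := γ • ∑' t : ℕ, ((1 : Matrix (Fin d) (Fin d) ℝ) - γ • H) ^ t * M *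
        ((1 : Matrix (Fin d) (Fin d) ℝ) - γ • H) ^ t
     H * X + X * H - γ • (H * X * H) = M) := by
  have hA := hle.isHermitian
  have hlt : ∀ i, hA.eigenvalues i < 1 :=
    hA.eigenvalues_lt_one_of_posDef_one_sub (by simpa using hH.smul hγ)
  have hsum := hA.summable_pow_mul_mul_pow
    (fun i => abs_lt.2 ⟨by linarith [hle.eigenvalues_nonneg i], hlt i⟩) M
  refine ⟨hsum, ?_⟩
  intro X
  rw [← sub_one_sub_smul_mul_mul_one_sub_smul]
  exact sub_eq_iff_eq_add'.2 hsum.mul_tsum_pow_mul_mul_pow_mul_add.symm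

/-- For `H` symmetric positive definite, `γ > 0` with `0 ⪯ I − γH`, and `M`
symmetric, the series `X = γ Σ_t (I−γH)^t M (I−γH)^t` converges and satisfies
`T̃(X) = HX + XH − γHXH = M`. -/
theorem tilde_T_inverse_formula
    {d : ℕ} (H : Matrix (Fin d) (Fin d) ℝ) (hH : H.PosDef)
    (γ : ℝ) (hγ : 0 < γ)
    (hle : ((1 : Matrix (Fin d) (Fin d) ℝ) - γ • H).PosSemidef)
    (M : Matrix (Fin d) (Fin d) ℝ) (hM : M.IsSymm) :
    Summable (fun t : ℕ => ((1 : Matrix (Fin d) (Fin d) ℝ) - γ • H) ^ t * M *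
        ((1 : Matrix (Fin d) (Fin d) ℝ) - γ • H) ^ t) ∧
    (let X := γ • ∑' t : ℕ, ((1 : Matrix (Fin d) (Fin d) ℝ) - γ • H) ^ t * M *
        ((1 : Matrix (Fin d) (Fin d) ℝ) - γ • H) ^ t
     H * X + X * H - γ • (H * X * H) = M) :=
  tilde_T_inverse_formula_general H hH γ hγ hle M
end

section
/- Suppose HC + CH = γ S(C) + γ Σ with H symmetric positive definite, C, Σ symmetric positive semidefinite, γ > 0, and suppose S(C) ⪯ κ H for some κ ≥ 0. Then Tr(C) ≤ (γ/2) Tr(H^{-1}Σ) + (γ/2) κ d. -/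
/-!
Multiplying the fixed-point equation on the left by `H⁻¹` and taking traces gives
`2 Tr C = γ Tr (H⁻¹ S(C)) + γ Tr (H⁻¹ Σ)`. Moreover `Tr (H⁻¹ S(C)) ≤ κ d`, because
`κ d - Tr (H⁻¹ S(C)) = Tr (H⁻¹ (κ H - S(C)))` is the trace of a product of two positive
semidefinite matrices, hence nonnegative.
-/

open Matrix

namespace Matrix

open scoped ComplexOrder

variable {n 𝕜 : Type*} [Fintype n] [RCLike 𝕜]

open scoped MatrixOrder in
theorem PosSemidef.trace_mul_nonneg {A B : Matrix n n 𝕜} (hA : A.PosSemidef)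
    (hB : B.PosSemidef) : 0 ≤ (A * B).trace := by
  classical
  obtain ⟨X, rfl⟩ := CStarAlgebra.nonneg_iff_eq_star_mul_self.mp hA.nonneg
  rw [mul_assoc, trace_mul_comm]
  exact (hB.mul_mul_conjTranspose_same X).trace_nonneg

theorem PosDef.trace_inv_mul_le [DecidableEq n] {H S : Matrix n n 𝕜} (hH : H.PosDef) {κ : ℝ}
    (hS : (κ • H - S).PosSemidef) : (H⁻¹ * S).trace ≤ κ * Fintype.card n := by
  have h := hH.inv.posSemidef.trace_mul_nonneg hS
  rwa [mul_sub, Matrix.mul_smul, nonsing_inv_mul H (H.isUnit_iff_isUnit_det.mp hH.isUnit),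
    trace_sub, trace_smul, trace_one, RCLike.real_smul_eq_coe_mul, sub_nonneg] at h

theorem trace_inv_mul_anticommutator {R : Type*} [CommRing R] [DecidableEq n]
    {H : Matrix n n R} (hH : IsUnit H.det) (C : Matrix n n R) :
    (H⁻¹ * (H * C + C * H)).trace = 2 * C.trace := by
  rw [mul_add, ← mul_assoc, nonsing_inv_mul H hH, one_mul, trace_add, ← mul_assoc,
    trace_mul_cycle, mul_nonsing_inv H hH, one_mul, two_mul]

end Matrix

theorem trace_fixed_point_bound_general
    {d : ℕ} (H C Sg SC : Matrix (Fin d) (Fin d) ℝ)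
    (hH : H.PosDef)
    (κ : ℝ)
    (hSCle : (κ • H - SC).PosSemidef)
    (γ : ℝ) (hγ : 0 < γ)
    (heq : H * C + C * H = γ • SC + γ • Sg) :
    C.trace ≤ (γ / 2) * (H⁻¹ * Sg).trace + (γ / 2) * κ * d := by
  have htrace : 2 * C.trace = γ * (H⁻¹ * SC).trace + γ * (H⁻¹ * Sg).trace := by
    rw [← trace_inv_mul_anticommutator (H.isUnit_iff_isUnit_det.mp hH.isUnit), heq, mul_add,
      trace_add, Matrix.mul_smul, Matrix.mul_smul, trace_smul, trace_smul, smul_eq_mul,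
      smul_eq_mul]
  have hSC : (H⁻¹ * SC).trace ≤ κ * d := by simpa using hH.trace_inv_mul_le hSCle
  have hγSC := mul_le_mul_of_nonneg_left hSC hγ.le
  linarith

/-- From `HC + CH = γS(C) + γΣ` with `S(C) ⪯ κH`, one gets
`Tr(C) ≤ (γ/2) Tr(H⁻¹Σ) + (γ/2) κ d`. -/
theorem trace_fixed_point_bound
    {d : ℕ} (H C Sg SC : Matrix (Fin d) (Fin d) ℝ)
    (hH : H.PosDef) (hC : C.PosSemidef) (hSg : Sg.PosSemidef)
    (hSCpsd : SC.PosSemidef) (κ : ℝ) (hκ : 0 ≤ κ)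
    (hSCle : (κ • H - SC).PosSemidef)
    (γ : ℝ) (hγ : 0 < γ)
    (heq : H * C + C * H = γ • SC + γ • Sg) :
    C.trace ≤ (γ / 2) * (H⁻¹ * Sg).trace + (γ / 2) * κ * d :=
  trace_fixed_point_bound_general H C Sg SC hH κ hSCle γ hγ heq
end
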